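/- Let F be the 'spider' tree on n ≥ 4 vertices consisting of one center vertex of degree 3 joined to three paths whose lengths sum to n − 1. Then Σ_{uv ∈ E(F)}(d_u + d_v) = 4(n−1), and consequently the first subdivision F₁ of F (inserting one vertex on each edge) is a neutral tree on 2n − 1 vertices. -/

import Mathlib

open Finset

attribute [local instance] Classical.propDecidable

namespace Neutral

/-- Number of edges of `G`. -/
noncomputable def m {V : Type*} [Fintype V] (G : SimpleGraph V) : ℕ :=
  G.edgeFinset.card

/-- `∑_{uv ∈ E} d_u · d_v`, each edge counted once. -/
noncomputable def dd {V : Type*} [Fintype V] (G : SimpleGraph V) : ℕ :=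
  ∑ e ∈ G.edgeFinset,
    Sym2.lift ⟨fun u v => G.degree u * G.degree v, fun _ _ => Nat.mul_comm _ _⟩ e

/-- `∑_{uv ∈ E} (d_u + d_v)`, each edge counted once. -/
noncomputable def ds {V : Type*} [Fintype V] (G : SimpleGraph V) : ℕ :=
  ∑ e ∈ G.edgeFinset,
    Sym2.lift ⟨fun u v => G.degree u + G.degree v, fun _ _ => Nat.add_comm _ _⟩ e

/-- `∑_{uv ∈ E} (d_u² + d_v²)`, each edge counted once. -/
noncomputable def dsq {V : Type*} [Fintype V] (G : SimpleGraph V) : ℕ :=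
  ∑ e ∈ G.edgeFinset,
    Sym2.lift ⟨fun u v => G.degree u ^ 2 + G.degree v ^ 2, fun _ _ => Nat.add_comm _ _⟩ e

/-- A graph is irregular if it is not regular of any degree. -/
def Irregular {V : Type*} [Fintype V] (G : SimpleGraph V) : Prop :=
  ¬ ∃ k, G.IsRegularOfDegree k

end Neutral

open Neutral

namespace Neutral

/-- A chosen pair of endpoints of an unordered edge. -/
noncomputable def ends {V : Type*} (e : Sym2 V) : V × V :=
  Classical.choose (Quot.exists_rep e)

/-- One-directional adjacency used to build the `s`-th subdivision graph:
the new vertices `(e,0), …, (e,s-1)` inserted on the edge `e` form a path joining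
the two endpoints of `e`. -/
def subS {V : Type*} (G : SimpleGraph V) (s : ℕ) :
    (V ⊕ (G.edgeSet × Fin s)) → (V ⊕ (G.edgeSet × Fin s)) → Prop
  | Sum.inl u, Sum.inr (e, i) =>
      (i.val = 0 ∧ u = (ends (e : Sym2 V)).1) ∨ (i.val = s - 1 ∧ u = (ends (e : Sym2 V)).2)
  | Sum.inr (e, i), Sum.inr (f, j) => e = f ∧ i.val + 1 = j.val
  | _, _ => False

/-- The `s`-th subdivision graph `G_s`: every edge of `G` is subdivided by `s` new
vertices. -/
noncomputable def Subdiv {V : Type*} (G : SimpleGraph V) (s : ℕ) :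
    SimpleGraph (V ⊕ (G.edgeSet × Fin s)) where
  Adj x y := x ≠ y ∧ (subS G s x y ∨ subS G s y x)
  symm := ⟨fun _ _ h => ⟨Ne.symm h.1, h.2.symm⟩⟩
  loopless := ⟨fun _ h => h.1 rfl⟩

end Neutral

/-!
The edges of the first subdivision `F₁` correspond to the darts of `F`: the dart `(u, v)` gives
the edge from `u` to the midpoint of `uv`, whose end degrees are `d_u` and `2`. Summing over
darts, `m(F₁) = 2m`, `Σ_{E(F₁)} d_i d_j = 2 Σ_E (d_u + d_v)` and
`Σ_{E(F₁)} (d_i + d_j) = Σ_E (d_u + d_v) + 4m`, so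
`4 m(F₁) Σ d_i d_j - (Σ (d_i + d_j))² = -(Σ_E (d_u + d_v) - 4m)²`, and `F₁` is neutral exactly
when `Σ_E (d_u + d_v) = 4m`. For a spider this holds: `Σ_E (d_u + d_v) = Σ_v d_v²`, and
`d² = 3d - 2` for `d ∈ {1, 2}`, so `Σ_v d_v² = 9 + 3 (2m - 3) - 2 (n - 1) = 4m` as `n = m + 1`.
-/

open SimpleGraph
namespace Neutral

section Handshake

variable {V : Type*} [Fintype V] (G : SimpleGraph V)

lemma sum_darts_fst (f : V → ℕ) : ∑ d : G.Dart, f d.fst = ∑ v, G.degree v * f v := by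
  rw [← Finset.sum_fiberwise Finset.univ (fun d : G.Dart => d.fst)]
  refine Finset.sum_congr rfl fun v _ => ?_
  rw [Finset.sum_congr rfl fun d hd => congrArg f (Finset.mem_filter.1 hd).2, Finset.sum_const,
    smul_eq_mul]
  congr 1
  convert G.dart_fst_fiber_card_eq_degree v

lemma sum_edgeFinset_lift_add (f : V → ℕ) :
    ∑ e ∈ G.edgeFinset, Sym2.lift ⟨fun u v => f u + f v, fun _ _ => Nat.add_comm _ _⟩ e =
      ∑ v, G.degree v * f v := by
  rw [← sum_darts_fst, ← Finset.sum_fiberwise_of_maps_to (g := Dart.edge)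
    (fun d _ => mem_edgeFinset.2 d.edge_mem)]
  refine Finset.sum_congr rfl fun e he => ?_
  induction e with
  | _ u w =>
    let d : G.Dart := ⟨(u, w), mem_edgeFinset.1 he⟩
    rw [show Finset.univ.filter (fun d' : G.Dart => d'.edge = s(u, w)) = {d, d.symm} from
      d.edge_fiber, Finset.sum_pair d.symm_ne.symm]
    rfl

lemma ds_eq_sum_degree_sq : ds G = ∑ v, G.degree v ^ 2 := by
  simp only [ds, sum_edgeFinset_lift_add, sq]

end Handshake

section Subdivision

variable {V : Type*} (F : SimpleGraph V)

lemma mk_ends (e : Sym2 V) : s((ends e).1, (ends e).2) = e :=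
  Classical.choose_spec (Quot.exists_rep e)

lemma subdiv_one_not_adj_inl_inl (u v : V) : ¬ (Subdiv F 1).Adj (Sum.inl u) (Sum.inl v) := by
  rintro ⟨-, h | h⟩ <;> exact h

lemma subdiv_one_not_adj_inr_inr (p q : F.edgeSet × Fin 1) :
    ¬ (Subdiv F 1).Adj (Sum.inr p) (Sum.inr q) := by
  rintro ⟨-, ⟨-, h⟩ | ⟨-, h⟩⟩ <;> omega

lemma subdiv_one_adj_inl_inr (u : V) (p : F.edgeSet × Fin 1) :
    (Subdiv F 1).Adj (Sum.inl u) (Sum.inr p) ↔ u ∈ (p.1 : Sym2 V) := by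
  obtain ⟨ε, i⟩ := p
  rw [show u ∈ (ε : Sym2 V) ↔ u = (ends (ε : Sym2 V)).1 ∨ u = (ends (ε : Sym2 V)).2 by
    rw [← Sym2.mem_iff, mk_ends]]
  constructor
  · rintro ⟨-, (⟨-, h⟩ | ⟨-, h⟩) | h⟩
    · exact Or.inl h
    · exact Or.inr h
    · exact h.elim
  · intro h
    exact ⟨Sum.inl_ne_inr, Or.inl (h.imp (⟨by omega, ·⟩) (⟨by omega, ·⟩))⟩

def subdivOneEdge (d : F.Dart) : Sym2 (V ⊕ (F.edgeSet × Fin 1)) :=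
  s(Sum.inl d.fst, Sum.inr (⟨d.edge, d.edge_mem⟩, 0))

lemma subdivOneEdge_injective : Function.Injective (subdivOneEdge F) := by
  intro d d' h
  simp only [subdivOneEdge, Sym2.eq_iff, Sum.inl.injEq, Sum.inr.injEq, Prod.mk.injEq,
    Subtype.mk.injEq, reduceCtorEq, false_and, or_false] at h
  obtain ⟨hfst, hedge, -⟩ := h
  rw [Dart.edge, Dart.edge, hfst] at hedge
  exact (Dart.ext_iff _ _).2 (Prod.ext hfst (Sym2.congr_right.1 hedge))

lemma subdivOneEdge_mem_edgeSet (d : F.Dart) : subdivOneEdge F d ∈ (Subdiv F 1).edgeSet :=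
  (subdiv_one_adj_inl_inr F _ _).2 (Sym2.mem_mk_left _ _)

lemma exists_subdivOneEdge_eq (u : V) (p : F.edgeSet × Fin 1) (h : u ∈ (p.1 : Sym2 V)) :
    ∃ d : F.Dart, subdivOneEdge F d = s(Sum.inl u, Sum.inr p) := by
  obtain ⟨⟨e, he⟩, i⟩ := p
  obtain rfl : i = 0 := Subsingleton.elim _ _
  have hadj : F.Adj u (Sym2.Mem.other h) := by rwa [← mem_edgeSet, Sym2.other_spec h]
  exact ⟨⟨(u, _), hadj⟩, by
    rw [subdivOneEdge]
    congr
    exact Sym2.other_spec h⟩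

lemma reachable_subdiv_one_inl {u v : V} (h : F.Reachable u v) :
    (Subdiv F 1).Reachable (Sum.inl u) (Sum.inl v) := by
  rw [reachable_iff_reflTransGen] at h ⊢
  refine Relation.ReflTransGen.lift' Sum.inl (fun a b hab => ?_) _ _ h
  let p : F.edgeSet × Fin 1 := (⟨s(a, b), hab⟩, 0)
  exact .tail (.single ((subdiv_one_adj_inl_inr F a p).2 (Sym2.mem_mk_left a b)))
    ((subdiv_one_adj_inl_inr F b p).2 (Sym2.mem_mk_right a b)).symm

lemma connected_subdiv_one (hF : F.Connected) : (Subdiv F 1).Connected := by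
  obtain ⟨v⟩ := hF.nonempty
  refine (connected_iff_exists_forall_reachable _).2 ⟨Sum.inl v, ?_⟩
  rintro (u | p)
  · exact reachable_subdiv_one_inl F (hF v u)
  · have hu := (p.1 : Sym2 V).out_fst_mem
    exact (reachable_subdiv_one_inl F (hF v _)).trans
      ((subdiv_one_adj_inl_inr F _ p).2 hu).reachable

variable [Fintype V]

lemma edgeFinset_subdiv_one : (Subdiv F 1).edgeFinset = Finset.univ.image (subdivOneEdge F) := by
  ext e
  simp only [mem_edgeFinset, Finset.mem_image, Finset.mem_univ, true_and]
  refine ⟨fun he => ?_, fun ⟨d, hd⟩ => hd ▸ subdivOneEdge_mem_edgeSet F d⟩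
  induction e with
  | _ x y =>
    rw [mem_edgeSet] at he
    match x, y, he with
    | Sum.inl u, Sum.inl v, he => exact (subdiv_one_not_adj_inl_inl F u v he).elim
    | Sum.inr p, Sum.inr q, he => exact (subdiv_one_not_adj_inr_inr F p q he).elim
    | Sum.inl u, Sum.inr p, he =>
      exact exists_subdivOneEdge_eq F u p ((subdiv_one_adj_inl_inr F u p).1 he)
    | Sum.inr p, Sum.inl u, he =>
      rw [Sym2.eq_swap]
      exact exists_subdivOneEdge_eq F u p ((subdiv_one_adj_inl_inr F u p).1 he.symm)

lemma sum_edgeFinset_subdiv_one {M : Type*} [AddCommMonoid M]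
    (g : Sym2 (V ⊕ (F.edgeSet × Fin 1)) → M) :
    ∑ e ∈ (Subdiv F 1).edgeFinset, g e = ∑ d : F.Dart, g (subdivOneEdge F d) := by
  rw [edgeFinset_subdiv_one, Finset.sum_image fun d _ d' _ h => subdivOneEdge_injective F h]

lemma m_subdiv_one : m (Subdiv F 1) = 2 * m F := by
  rw [m, m, ← dart_card_eq_twice_card_edges, edgeFinset_subdiv_one,
    Finset.card_image_of_injective _ (subdivOneEdge_injective F), Finset.card_univ]

lemma degree_subdiv_one_eq_card_filter (x : V ⊕ (F.edgeSet × Fin 1)) :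
    (Subdiv F 1).degree x = #{d : F.Dart | x ∈ subdivOneEdge F d} := by
  rw [← card_incidenceFinset_eq_degree, incidenceFinset_eq_filter, edgeFinset_subdiv_one,
    Finset.filter_image, Finset.card_image_of_injective _ (subdivOneEdge_injective F)]

lemma degree_subdiv_one_inl (u : V) : (Subdiv F 1).degree (Sum.inl u) = F.degree u := by
  rw [degree_subdiv_one_eq_card_filter, ← dart_fst_fiber_card_eq_degree]
  congr 1
  ext d
  simp [subdivOneEdge, eq_comm]

lemma degree_subdiv_one_inr (p : F.edgeSet × Fin 1) : (Subdiv F 1).degree (Sum.inr p) = 2 := by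
  obtain ⟨⟨e, he⟩, i⟩ := p
  obtain rfl : i = 0 := Subsingleton.elim _ _
  rw [degree_subdiv_one_eq_card_filter, ← F.dart_edge_fiber_card e he]
  congr 1
  ext d
  simp [subdivOneEdge, eq_comm]

lemma card_subdiv_one_vertices :
    Fintype.card (V ⊕ (F.edgeSet × Fin 1)) = Fintype.card V + m F := by
  rw [Fintype.card_sum, Fintype.card_prod, Fintype.card_fin, mul_one, m, edgeFinset_card]

lemma dd_subdiv_one : dd (Subdiv F 1) = 2 * ds F := by
  rw [dd, sum_edgeFinset_subdiv_one, ds, sum_edgeFinset_lift_add,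
    ← sum_darts_fst F (fun v => F.degree v), Finset.mul_sum]
  refine Finset.sum_congr rfl fun d _ => ?_
  dsimp only [subdivOneEdge, Sym2.lift_mk]
  rw [degree_subdiv_one_inl, degree_subdiv_one_inr, mul_comm]

lemma ds_subdiv_one : ds (Subdiv F 1) = ds F + 4 * m F := by
  have hm : 4 * m F = ∑ _d : F.Dart, 2 := by
    rw [Finset.sum_const, Finset.card_univ, dart_card_eq_twice_card_edges, m, smul_eq_mul]
    ring
  rw [ds, sum_edgeFinset_subdiv_one, ds, sum_edgeFinset_lift_add,
    ← sum_darts_fst F (fun v => F.degree v), hm, ← Finset.sum_add_distrib]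
  refine Finset.sum_congr rfl fun d _ => ?_
  dsimp only [subdivOneEdge, Sym2.lift_mk]
  rw [degree_subdiv_one_inl, degree_subdiv_one_inr]

lemma subdiv_one_neutral_iff :
    4 * m (Subdiv F 1) * dd (Subdiv F 1) = ds (Subdiv F 1) ^ 2 ↔ ds F = 4 * m F := by
  rw [m_subdiv_one, dd_subdiv_one, ds_subdiv_one]
  constructor
  · intro h
    have h' : ((ds F : ℤ) - 4 * m F) ^ 2 = 0 := by
      have hz := congrArg (Nat.cast : ℕ → ℤ) h
      push_cast at hz
      linear_combination -hz
    have := pow_eq_zero_iff two_ne_zero |>.1 h'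
    omega
  · intro h
    rw [h]
    ring

lemma isTree_subdiv_one (hF : F.IsTree) : (Subdiv F 1).IsTree := by
  rw [isTree_iff_connected_and_card]
  refine ⟨connected_subdiv_one F hF.connected, ?_⟩
  rw [Nat.card_eq_fintype_card, Nat.card_eq_fintype_card, ← edgeFinset_card, ← m,
    card_subdiv_one_vertices, m_subdiv_one, ← hF.card_edgeFinset, m]
  ring

end Subdivision

lemma ds_eq_four_mul_m_of_spider {V : Type*} [Fintype V] {G : SimpleGraph V} (hG : G.IsTree)
    {c : V} (hc : G.degree c = 3) (hother : ∀ v, v ≠ c → G.degree v ≤ 2) :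
    ds G = 4 * m G := by
  obtain ⟨w, hw⟩ := G.degree_pos_iff_exists_adj c |>.1 (by omega)
  have : Nontrivial V := ⟨⟨c, w, hw.ne⟩⟩
  have hleaf_or_inner : ∀ v ∈ Finset.univ.erase c, G.degree v ^ 2 + 2 = 3 * G.degree v := by
    intro v hv
    have h1 := hG.connected.preconnected.degree_pos_of_nontrivial v
    have h2 := hother v (Finset.ne_of_mem_erase hv)
    interval_cases G.degree v <;> rfl
  have hsum := Finset.sum_congr rfl hleaf_or_inner
  rw [Finset.sum_add_distrib, Finset.sum_const, ← Finset.mul_sum, smul_eq_mul,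
    Finset.card_erase_of_mem (Finset.mem_univ c), Finset.card_univ, ← hG.card_edgeFinset] at hsum
  have hdeg := G.sum_degrees_eq_twice_card_edges
  rw [← Finset.add_sum_erase _ _ (Finset.mem_univ c), hc] at hdeg
  rw [ds_eq_sum_degree_sq, ← Finset.add_sum_erase _ _ (Finset.mem_univ c), hc, m]
  omega

end Neutral

theorem stmt_17_general {V : Type*} [Fintype V] (F : SimpleGraph V) (n : ℕ)
    (hcard : Fintype.card V = n) (htree : F.IsTree)
    (c : V) (hc : F.degree c = 3) (hother : ∀ v, v ≠ c → F.degree v ≤ 2) :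
    ds F = 4 * (n - 1) ∧
      (Subdiv F 1).IsTree ∧
      Fintype.card (V ⊕ (F.edgeSet × Fin 1)) = 2 * n - 1 ∧
      4 * m (Subdiv F 1) * dd (Subdiv F 1) = (ds (Subdiv F 1)) ^ 2 := by
  have hn : m F + 1 = n := hcard ▸ htree.card_edgeFinset
  have hds : ds F = 4 * m F := ds_eq_four_mul_m_of_spider htree hc hother
  refine ⟨by omega, isTree_subdiv_one F htree, ?_, (subdiv_one_neutral_iff F).2 hds⟩
  rw [card_subdiv_one_vertices]
  omega

/-- if `F` is a spider tree on `n ≥ 4` vertices (a tree with one centre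
of degree 3 and all other vertices of degree at most 2, i.e. three paths emanating from
the centre), then `∑_{uv∈E(F)}(d_u+d_v) = 4(n−1)`, and the first subdivision `F₁` of
`F` is a neutral tree on `2n − 1` vertices. -/
theorem stmt_17 {V : Type*} [Fintype V] (F : SimpleGraph V) (n : ℕ)
    (hcard : Fintype.card V = n) (hn : 4 ≤ n) (htree : F.IsTree)
    (c : V) (hc : F.degree c = 3) (hother : ∀ v, v ≠ c → F.degree v ≤ 2) :
    ds F = 4 * (n - 1) ∧
      (Subdiv F 1).IsTree ∧
      Fintype.card (V ⊕ (F.edgeSet × Fin 1)) = 2 * n - 1 ∧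
      4 * m (Subdiv F 1) * dd (Subdiv F 1) = (ds (Subdiv F 1)) ^ 2 :=
  stmt_17_general F n hcard htree c hc hother
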